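/- arXiv:2004.03218 — 3 statements merged into one kernel-verified Lean document; each statement's English description precedes it below -/
import Mathlib

section
/- Let $G$ be a locally compact second countable group and $H$ a closed subgroup such that the pair $(G,H)$ does not have relative property (T). Then there exists a conditionally negative definite function $\psi:G\to\mathbb R_{\ge0}$, continuous, whose restriction to $H$ is unbounded. -/
/-! Failure of property (T) gives a strongly continuous unitary representation `π` with almost
invariant vectors but no nonzero `H`-fixed vector. Then every unit vector `ξ` is moved by more
than `1/2` by some element of `H`: otherwise the closed convex hull of its `H`-orbit lies in the
closed ball of radius `1/2` around `ξ`, and its point of minimal norm is a nonzero `H`-fixed vector.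
Pick unit vectors `ξₙ` moved by less than `((n+1)2ⁿ)^(-1/2)` on the `n`-th compact set of an
exhaustion of `G`. Then `ψ g = ∑ₙ (n+1)‖π g ξₙ - ξₙ‖²` converges locally uniformly, is conditionally
negative definite because each `‖π g ξ - ξ‖²` is, and exceeds `(n+1)/4` somewhere on `H`. -/

open scoped ENNReal

/-- A (strongly continuous) unitary representation `π` of a topological group `G` almost
has invariant vectors if for every compact `Q ⊆ G` and `ε > 0` there is a unit vector
moved by less than `ε` by all elements of `Q`. -/
def AlmostHasInvariantVectors {G : Type*} [Group G] [TopologicalSpace G]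
    {E : Type*} [NormedAddCommGroup E] [InnerProductSpace ℂ E]
    (π : G →* (E ≃ₗᵢ[ℂ] E)) : Prop :=
  ∀ Q : Set G, IsCompact Q → ∀ ε > (0 : ℝ), ∃ ξ : E, ‖ξ‖ = 1 ∧ ∀ g ∈ Q, ‖π g ξ - ξ‖ < ε

/-- The pair `H ⊆ G` has Kazhdan's property (T): every strongly continuous unitary
representation of `G` which almost has invariant vectors has a nonzero `H`-fixed vector. -/
def PairHasPropertyT (G : Type) [Group G] [TopologicalSpace G] (H : Subgroup G) : Prop :=
  ∀ (E : Type) (_ : NormedAddCommGroup E), ∀ (_ : InnerProductSpace ℂ E) (_ : CompleteSpace E)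
    (π : G →* (E ≃ₗᵢ[ℂ] E)), (∀ ξ : E, Continuous fun g => π g ξ) →
    AlmostHasInvariantVectors π → ∃ ξ : E, ξ ≠ 0 ∧ ∀ h ∈ H, π h ξ = ξ

/-- `ψ : G → ℝ` is conditionally negative definite. -/
def IsCondNegDef {G : Type*} [Group G] (ψ : G → ℝ) : Prop :=
  ψ 1 = 0 ∧ (∀ g : G, ψ g⁻¹ = ψ g) ∧
    ∀ (n : ℕ) (g : Fin n → G) (c : Fin n → ℝ), (∑ i, c i) = 0 →
      ∑ i, ∑ j, c i * c j * ψ ((g i)⁻¹ * g j) ≤ 0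

open scoped RealInnerProductSpace

theorem Convex.exists_forall_norm_le_imp_eq {F : Type*} [NormedAddCommGroup F]
    [InnerProductSpace ℝ F] {K : Set F} (hK : Convex ℝ K) (hne : K.Nonempty)
    (hc : IsComplete K) : ∃ m ∈ K, ∀ x ∈ K, ‖x‖ ≤ ‖m‖ → x = m := by
  obtain ⟨m, hm, hmin⟩ := exists_norm_eq_iInf_of_complete_convex hne hc hK 0
  refine ⟨m, hm, fun x hx hle => ?_⟩
  have hxm : ‖m‖ ^ 2 ≤ ⟪m, x⟫ := by
    have := (norm_eq_iInf_iff_real_inner_le_zero hK hm).1 hmin x hx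
    rw [zero_sub, inner_neg_left, inner_sub_right, real_inner_self_eq_norm_sq] at this
    linarith
  have hdist : ‖x - m‖ ^ 2 ≤ 0 := by
    rw [norm_sub_sq_real, real_inner_comm]
    nlinarith [norm_nonneg x, norm_nonneg m]
  exact sub_eq_zero.1 (norm_eq_zero.1 (by nlinarith [norm_nonneg (x - m)]))

theorem sum_sum_mul_mul_norm_sub_sq {ι F : Type*} [NormedAddCommGroup F]
    [InnerProductSpace ℝ F] (s : Finset ι) (c : ι → ℝ) (v : ι → F)
    (hc : ∑ i ∈ s, c i = 0) :
    ∑ i ∈ s, ∑ j ∈ s, c i * c j * ‖v i - v j‖ ^ 2 = -2 * ‖∑ i ∈ s, c i • v i‖ ^ 2 := by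
  have hsq : ‖∑ i ∈ s, c i • v i‖ ^ 2 = ∑ i ∈ s, ∑ j ∈ s, c i * c j * ⟪v i, v j⟫ := by
    simp only [← real_inner_self_eq_norm_sq, sum_inner, inner_sum, real_inner_smul_left,
      real_inner_smul_right]
    exact Finset.sum_comm.trans
      (Finset.sum_congr rfl fun i _ => Finset.sum_congr rfl fun j _ => by ring)
  simp only [norm_sub_sq_real, mul_add, mul_sub, Finset.sum_add_distrib, Finset.sum_sub_distrib]
  have hleft : ∑ i ∈ s, ∑ j ∈ s, c i * c j * ‖v i‖ ^ 2 = 0 := by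
    simp only [mul_right_comm (c _) (c _), ← Finset.mul_sum, hc, mul_zero, Finset.sum_const_zero]
  have hright : ∑ i ∈ s, ∑ j ∈ s, c i * c j * ‖v j‖ ^ 2 = 0 := by
    simp only [mul_assoc, ← Finset.mul_sum, ← Finset.sum_mul, hc, zero_mul]
  have hmid : ∑ i ∈ s, ∑ j ∈ s, c i * c j * (2 * ⟪v i, v j⟫) = 2 * ‖∑ i ∈ s, c i • v i‖ ^ 2 := by
    simp only [mul_left_comm _ (2 : ℝ), ← Finset.mul_sum, hsq]
  rw [hleft, hright, hmid]
  ring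

namespace IsCondNegDef

variable {G : Type*} [Group G]

theorem const_mul {ψ : G → ℝ} (hψ : IsCondNegDef ψ) {a : ℝ} (ha : 0 ≤ a) :
    IsCondNegDef fun g => a * ψ g := by
  obtain ⟨h1, hinv, hneg⟩ := hψ
  refine ⟨by simp [h1], fun g => by simp only [hinv], fun n g c hc => ?_⟩
  have hfactor : ∑ i, ∑ j, c i * c j * (a * ψ ((g i)⁻¹ * g j))
      = a * ∑ i, ∑ j, c i * c j * ψ ((g i)⁻¹ * g j) := by
    simp only [Finset.mul_sum]
    exact Finset.sum_congr rfl fun _ _ => Finset.sum_congr rfl fun _ _ => by ring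
  exact hfactor ▸ mul_nonpos_of_nonneg_of_nonpos ha (hneg n g c hc)

theorem tsum {ψ : ℕ → G → ℝ} (hψ : ∀ n, IsCondNegDef (ψ n))
    (hsum : ∀ g, Summable fun n => ψ n g) : IsCondNegDef fun g => ∑' n, ψ n g := by
  refine ⟨by simp [(hψ _).1], fun g => by simp only [(hψ _).2.1], fun k g c hc => ?_⟩
  have hswap : ∑ i, ∑ j, c i * c j * ∑' n, ψ n ((g i)⁻¹ * g j)
      = ∑' n, ∑ i, ∑ j, c i * c j * ψ n ((g i)⁻¹ * g j) := by
    simp only [← tsum_mul_left]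
    rw [Summable.tsum_finsetSum fun i _ => summable_sum fun j _ => (hsum _).mul_left _]
    exact Finset.sum_congr rfl fun i _ =>
      (Summable.tsum_finsetSum fun j _ => (hsum _).mul_left _).symm
  rw [hswap]
  exact tsum_nonpos fun n => (hψ n).2.2 k g c hc

end IsCondNegDef

namespace CompactExhaustion

variable {X : Type*} [TopologicalSpace X] (Q : CompactExhaustion X) {f : ℕ → X → ℝ} {u : ℕ → ℝ}

theorem eventually_norm_le (hle : ∀ n, ∀ x ∈ Q n, ‖f n x‖ ≤ u n) (m : ℕ) :
    ∀ᶠ n in Filter.cofinite, ∀ x ∈ Q m, ‖f n x‖ ≤ u n := by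
  rw [Nat.cofinite_eq_atTop, Filter.eventually_atTop]
  exact ⟨m, fun n hn x hx => hle n x (Q.subset hn hx)⟩

theorem summable_of_norm_le (hu : Summable u) (hle : ∀ n, ∀ x ∈ Q n, ‖f n x‖ ≤ u n) (x : X) :
    Summable fun n => f n x := by
  obtain ⟨m, hm⟩ := Q.exists_mem x
  exact hu.of_norm_bounded_eventually ((Q.eventually_norm_le hle m).mono fun n hn => hn x hm)

theorem continuous_tsum_of_norm_le (hf : ∀ n, Continuous (f n)) (hu : Summable u)
    (hle : ∀ n, ∀ x ∈ Q n, ‖f n x‖ ≤ u n) : Continuous fun x => ∑' n, f n x := by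
  refine continuous_iff_continuousAt.2 fun x => ?_
  obtain ⟨m, hm⟩ := Q.exists_mem_nhds x
  refine ((tendstoUniformlyOn_tsum_of_cofinite_eventually hu (Q.eventually_norm_le hle m)
    ).continuousOn (Filter.Frequently.of_forall fun s => ?_)).continuousAt hm
  exact (continuous_finsetSum s fun n _ => hf n).continuousOn

end CompactExhaustion

section Representation

variable {G : Type*} [Group G] {E : Type*} [NormedAddCommGroup E] [InnerProductSpace ℂ E]

theorem norm_map_inv_mul_apply_sub (π : G →* (E ≃ₗᵢ[ℂ] E)) (a b : G) (ξ : E) :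
    ‖π (a⁻¹ * b) ξ - ξ‖ = ‖π b ξ - π a ξ‖ := by
  rw [← (π a).norm_map, map_sub, ← Function.comp_apply (f := π a),
    ← LinearIsometryEquiv.coe_mul, ← map_mul, mul_inv_cancel_left]

theorem isCondNegDef_norm_map_apply_sub_sq (π : G →* (E ≃ₗᵢ[ℂ] E)) (ξ : E) :
    IsCondNegDef fun g => ‖π g ξ - ξ‖ ^ 2 := by
  let _ : InnerProductSpace ℝ E := .complexToReal
  refine ⟨by simp, fun g => ?_, fun n g c hc => ?_⟩
  · show ‖π g⁻¹ ξ - ξ‖ ^ 2 = ‖π g ξ - ξ‖ ^ 2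
    rw [← mul_one g⁻¹, norm_map_inv_mul_apply_sub, map_one, norm_sub_rev]
    rfl
  · calc ∑ i, ∑ j, c i * c j * ‖π ((g i)⁻¹ * g j) ξ - ξ‖ ^ 2
        = ∑ i, ∑ j, c i * c j * ‖π (g i) ξ - π (g j) ξ‖ ^ 2 := by
          rw [Finset.sum_comm]
          refine Finset.sum_congr rfl fun i _ => Finset.sum_congr rfl fun j _ => ?_
          rw [norm_map_inv_mul_apply_sub, mul_comm (c j)]
      _ = -2 * ‖∑ i, c i • π (g i) ξ‖ ^ 2 := sum_sum_mul_mul_norm_sub_sq _ c _ hc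
      _ ≤ 0 := by linarith [sq_nonneg ‖∑ i, c i • π (g i) ξ‖]

theorem exists_ne_zero_forall_mem_map_eq_of_norm_sub_le [CompleteSpace E]
    (π : G →* (E ≃ₗᵢ[ℂ] E)) (H : Subgroup G) {ξ : E} {r : ℝ} (hr : r < ‖ξ‖)
    (hξ : ∀ h ∈ H, ‖π h ξ - ξ‖ ≤ r) : ∃ η : E, η ≠ 0 ∧ ∀ h ∈ H, π h η = η := by
  let _ : InnerProductSpace ℝ E := .complexToReal
  set S := (fun h => π h ξ) '' H
  have hξS : ξ ∈ S := ⟨1, H.one_mem, by simp⟩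
  set K := closure (convexHull ℝ S)
  have hKball : K ⊆ Metric.closedBall ξ r := by
    refine closure_minimal (convexHull_min ?_ (convex_closedBall _ _)) Metric.isClosed_closedBall
    rintro _ ⟨h, hh, rfl⟩
    simpa [dist_eq_norm] using hξ h hh
  have hKinv : ∀ h ∈ H, Set.MapsTo (π h) K K := by
    intro h hh
    have hS : Set.MapsTo (π h) S S := by
      rintro _ ⟨k, hk, rfl⟩
      exact ⟨h * k, H.mul_mem hh hk, by simp [LinearIsometryEquiv.coe_mul]⟩
    have hlin : IsLinearMap ℝ (π h) := ⟨map_add _, map_real_smul _ (π h).continuous⟩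
    refine Set.MapsTo.closure (Set.mapsTo_iff_image_subset.2 ?_) (π h).continuous
    exact (hlin.image_convexHull S).trans_subset (convexHull_mono hS.image_subset)
  obtain ⟨η, hηK, hηmin⟩ := (convex_convexHull ℝ _).closure.exists_forall_norm_le_imp_eq
    ⟨ξ, subset_closure (subset_convexHull ℝ S hξS)⟩ isClosed_closure.isComplete
  refine ⟨η, ?_, fun h hh => hηmin _ (hKinv h hh hηK) ((π h).norm_map η).le⟩
  rintro rfl
  have h0 := hKball hηK
  rw [Metric.mem_closedBall, dist_zero_left] at h0
  linarith

theorem AlmostHasInvariantVectors.exists_almostInvariant_not_nearlyFixed [TopologicalSpace G]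
    [CompleteSpace E] {π : G →* (E ≃ₗᵢ[ℂ] E)} (hπ : AlmostHasInvariantVectors π)
    {H : Subgroup G} (hH : ∀ η : E, η ≠ 0 → ∃ h ∈ H, π h η ≠ η) {Q : Set G} (hQ : IsCompact Q)
    {ε : ℝ} (hε : 0 < ε) :
    ∃ ξ : E, (∀ g ∈ Q, ‖π g ξ - ξ‖ ^ 2 < ε) ∧ ∃ h ∈ H, 1 / 4 < ‖π h ξ - ξ‖ ^ 2 := by
  obtain ⟨ξ, hξ, hξQ⟩ := hπ Q hQ √ε (Real.sqrt_pos.2 hε)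
  refine ⟨ξ, fun g hg => (Real.lt_sqrt (norm_nonneg _)).1 (hξQ g hg), ?_⟩
  by_contra! hnear
  obtain ⟨η, hη, hηH⟩ := exists_ne_zero_forall_mem_map_eq_of_norm_sub_le π H
    (r := 1 / 2) (by rw [hξ]; norm_num) fun h hh => by
      nlinarith [hnear h hh, norm_nonneg (π h ξ - ξ)]
  obtain ⟨h, hh, hne⟩ := hH η hη
  exact hne (hηH h hh)

end Representation

theorem exists_condNegDef_unbounded_of_not_propertyT_general
    (G : Type) [Group G] [TopologicalSpace G]
    [LocallyCompactSpace G] [SecondCountableTopology G]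
    (H : Subgroup G)
    (hT : ¬ PairHasPropertyT G H) :
    ∃ ψ : G → ℝ, Continuous ψ ∧ (∀ g, 0 ≤ ψ g) ∧ IsCondNegDef ψ ∧
      ¬ BddAbove (ψ '' (H : Set G)) := by
  simp only [PairHasPropertyT] at hT
  push Not at hT
  obtain ⟨E, _, _, _, π, hπ, hπinv, hfix⟩ := hT
  let Q := CompactExhaustion.choice G
  choose ξ hξQ hξH using fun n : ℕ => hπinv.exists_almostInvariant_not_nearlyFixed hfix
    (Q.isCompact n) (ε := ((n + 1) * 2 ^ n)⁻¹) (by positivity)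
  set f : ℕ → G → ℝ := fun n g => (n + 1) * ‖π g (ξ n) - ξ n‖ ^ 2
  have hf0 : ∀ n g, 0 ≤ f n g := fun n g => by positivity
  have hfQ : ∀ n, ∀ g ∈ Q n, ‖f n g‖ ≤ (1 / 2) ^ n := fun n g hg => by
    rw [Real.norm_of_nonneg (hf0 n g)]
    calc f n g ≤ (n + 1) * (((n : ℝ) + 1) * 2 ^ n)⁻¹ :=
          mul_le_mul_of_nonneg_left (hξQ n g hg).le (by positivity)
      _ = (1 / 2) ^ n := by
        rw [mul_inv, ← mul_assoc, mul_inv_cancel₀ (by positivity), one_mul, one_div, inv_pow]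
  have hsum := Q.summable_of_norm_le summable_geometric_two hfQ
  refine ⟨fun g => ∑' n, f n g,
    Q.continuous_tsum_of_norm_le (fun n => by fun_prop) summable_geometric_two hfQ,
    fun g => tsum_nonneg (hf0 · g),
    IsCondNegDef.tsum (fun n => (isCondNegDef_norm_map_apply_sub_sq π (ξ n)).const_mul
      (by positivity)) hsum, ?_⟩
  rintro ⟨b, hb⟩
  obtain ⟨n, hn⟩ := exists_nat_gt (4 * b)
  obtain ⟨h, hh, hfar⟩ := hξH n
  have hlarge : ((n : ℝ) + 1) / 4 < f n h := by
    have := mul_lt_mul_of_pos_left hfar (by positivity : (0 : ℝ) < n + 1)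
    linarith
  linarith [(hsum h).le_tsum n fun m _ => hf0 m h, hb ⟨h, hh, rfl⟩]

/-- If a pair `H ⊆ G` of a locally compact second countable group and a closed subgroup
does not have property (T), then there is a continuous, nonnegative, conditionally
negative definite function `ψ : G → ℝ` whose restriction to `H` is unbounded. -/
theorem exists_condNegDef_unbounded_of_not_propertyT
    (G : Type) [Group G] [TopologicalSpace G] [IsTopologicalGroup G]
    [LocallyCompactSpace G] [SecondCountableTopology G]
    (H : Subgroup G) (hH : IsClosed (H : Set G))
    (hT : ¬ PairHasPropertyT G H) :
    ∃ ψ : G → ℝ, Continuous ψ ∧ (∀ g, 0 ≤ ψ g) ∧ IsCondNegDef ψ ∧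
      ¬ BddAbove (ψ '' (H : Set G)) :=
  exists_condNegDef_unbounded_of_not_propertyT_general G H hT
end

section
/- Let $(X,\mathcal C,\mu)$ be a measure space with a measure-preserving $G$-action and $H\subset G$ a subgroup. Let $\mathcal R$ be a collection of measurable sets closed under finite unions such that: for all $C,D\in\mathcal R$ and $\varepsilon>0$ there is $h\in H$ with $\mu(hC\cap D)<\varepsilon$. Suppose every finite-measure set $A\in\mathcal C$ can, for each $\varepsilon>0$, be covered by countably many sets from $\mathcal R$ of total measure at most $\mu(A)+\varepsilon$. Then for all finite-measure $A,B\in\mathcal C$ and every $\varepsilon>0$ there exists $h\in H$ with $\mu(hA\cap B)<\varepsilon$. -/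
open MeasureTheory Pointwise ENNReal

/-! Every finite-measure set is, up to measure `ε`, a set of `ℛ`: a countable cover from `ℛ`
with finite total measure has small tails, and its partial unions lie in `ℛ`. If `U, V ∈ ℛ`
approximate `A, B` this way, then `h • A ∩ B` is covered by `h • U ∩ V`, `h • (A \ U)` and
`B \ V`, and by invariance the middle set has measure `μ (A \ U)`, so an `h ∈ H` making
`μ (h • U ∩ V)` small does the same for `μ (h • A ∩ B)`. -/

namespace Set

theorem accumulate_mem_of_union_mem {α : Type*} {R : Set (Set α)}
    (hunion : ∀ C ∈ R, ∀ D ∈ R, C ∪ D ∈ R) {E : ℕ → Set α} (hE : ∀ n, E n ∈ R) (n : ℕ) :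
    accumulate E n ∈ R := by
  induction n with
  | zero => simpa only [accumulate_zero_nat] using hE 0
  | succ n ih => rw [accumulate_succ]; exact hunion _ ih _ (hE (n + 1))

theorem iUnion_diff_accumulate_subset {α : Type*} (E : ℕ → Set α) (n : ℕ) :
    (⋃ k, E k) \ accumulate E n ⊆ ⋃ k, E (k + n) := by
  rintro x ⟨hx, hxn⟩
  obtain ⟨m, hm⟩ := mem_iUnion.1 hx
  have hnm : n ≤ m := by
    by_contra! hmn
    exact hxn (mem_accumulate.2 ⟨m, hmn.le, hm⟩)
  exact mem_iUnion.2 ⟨m - n, by rwa [Nat.sub_add_cancel hnm]⟩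

end Set

namespace MeasureTheory

variable {X : Type*} [MeasurableSpace X] {μ : Measure X}

theorem exists_measure_diff_accumulate_lt {S : Set X} {E : ℕ → Set X} (hS : S ⊆ ⋃ n, E n)
    (hE : ∑' n, μ (E n) ≠ ∞) {δ : ℝ≥0∞} (hδ : 0 < δ) :
    ∃ n, μ (S \ Set.accumulate E n) < δ := by
  obtain ⟨n, hn⟩ := ((ENNReal.tendsto_sum_nat_add _ hE).eventually (gt_mem_nhds hδ)).exists
  refine ⟨n, lt_of_le_of_lt ?_ hn⟩
  calc μ (S \ Set.accumulate E n) ≤ μ (⋃ k, E (k + n)) :=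
        measure_mono <|
          (Set.sdiff_subset_sdiff_left hS).trans (Set.iUnion_diff_accumulate_subset E n)
    _ ≤ ∑' k, μ (E (k + n)) := measure_iUnion_le _

theorem exists_mem_measure_diff_lt_of_cover {R : Set (Set X)}
    (hunion : ∀ C ∈ R, ∀ D ∈ R, C ∪ D ∈ R) {A : Set X} {E : ℕ → Set X} (hER : ∀ n, E n ∈ R)
    (hA : A ⊆ ⋃ n, E n) (hE : ∑' n, μ (E n) ≠ ∞) {δ : ℝ≥0∞} (hδ : 0 < δ) :
    ∃ U ∈ R, μ (A \ U) < δ :=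
  let ⟨n, hn⟩ := exists_measure_diff_accumulate_lt hA hE hδ
  ⟨_, Set.accumulate_mem_of_union_mem hunion hER n, hn⟩

theorem MeasurePreserving.measure_preimage_inter_le {Y : Type*} [MeasurableSpace Y]
    {ν : Measure Y} {f : X → Y} (hf : MeasurePreserving f μ ν) (A U : Set Y) (B V : Set X) :
    μ (f ⁻¹' A ∩ B) ≤ μ (f ⁻¹' U ∩ V) + ν (A \ U) + μ (B \ V) := by
  have hcover : f ⁻¹' A ∩ B ⊆ (f ⁻¹' U ∩ V) ∪ f ⁻¹' (A \ U) ∪ (B \ V) := by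
    rintro x ⟨hxA, hxB⟩
    by_cases hxU : f x ∈ U <;> by_cases hxV : x ∈ V <;> simp_all
  calc μ (f ⁻¹' A ∩ B) ≤ μ (f ⁻¹' U ∩ V) + μ (f ⁻¹' (A \ U)) + μ (B \ V) :=
        (measure_mono hcover).trans <|
          (measure_union_le _ _).trans (add_le_add_left (measure_union_le _ _) _)
    _ ≤ μ (f ⁻¹' U ∩ V) + ν (A \ U) + μ (B \ V) := by
        gcongr _ + ?_ + _
        exact hf.measure_preimage_le _

end MeasureTheory

theorem weaklyC0_of_generating_collection_general
    {G X : Type*} [Group G] [MulAction G X] [MeasurableSpace X]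
    (μ : Measure X) (hμ : ∀ g : G, MeasurePreserving (fun x => g • x) μ μ)
    (H : Subgroup G) (R : Set (Set X))
    (hunion : ∀ C ∈ R, ∀ D ∈ R, C ∪ D ∈ R)
    (hR : ∀ C ∈ R, ∀ D ∈ R, ∀ ε : ℝ≥0∞, 0 < ε → ∃ h ∈ H, μ (h • C ∩ D) < ε)
    (hcover : ∀ A : Set X, MeasurableSet A → μ A ≠ ∞ → ∀ ε : ℝ≥0∞, 0 < ε →
      ∃ C : ℕ → Set X, (∀ n, C n ∈ R) ∧ A ⊆ ⋃ n, C n ∧ ∑' n, μ (C n) ≤ μ A + ε) :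
    ∀ A B : Set X, MeasurableSet A → MeasurableSet B → μ A ≠ ∞ → μ B ≠ ∞ →
      ∀ ε : ℝ≥0∞, 0 < ε → ∃ h ∈ H, μ (h • A ∩ B) < ε := by
  intro A B hA hB hAfin hBfin ε hε
  have hε₂ : 0 < ε / 2 := ENNReal.half_pos hε.ne'
  have hε₄ : 0 < ε / 2 / 2 := ENNReal.half_pos hε₂.ne'
  have approx : ∀ S, MeasurableSet S → μ S ≠ ∞ → ∃ U ∈ R, μ (S \ U) < ε / 2 / 2 := by
    intro S hS hSfin
    obtain ⟨E, hER, hSE, hEsum⟩ := hcover S hS hSfin 1 one_pos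
    exact exists_mem_measure_diff_lt_of_cover hunion hER hSE
      (ne_top_of_le_ne_top (add_ne_top.2 ⟨hSfin, one_ne_top⟩) hEsum) hε₄
  obtain ⟨U, hUR, hAU⟩ := approx A hA hAfin
  obtain ⟨V, hVR, hBV⟩ := approx B hB hBfin
  obtain ⟨h, hH, hUV⟩ := hR U hUR V hVR (ε / 2) hε₂
  refine ⟨h, hH, ?_⟩
  rw [← Set.preimage_smul_inv] at hUV ⊢
  calc μ ((fun x => h⁻¹ • x) ⁻¹' A ∩ B)
      ≤ μ ((fun x => h⁻¹ • x) ⁻¹' U ∩ V) + μ (A \ U) + μ (B \ V) :=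
        (hμ h⁻¹).measure_preimage_inter_le A U B V
    _ < ε / 2 + ε / 2 / 2 + ε / 2 / 2 := by gcongr
    _ = ε := by rw [add_assoc, ENNReal.add_halves, ENNReal.add_halves]

/-- Covering lemma for the weak `C₀` property: let `G` act measure-preservingly on
`(X, 𝒞, μ)`, `H ≤ G`, and let `ℛ` be a collection of measurable sets closed under finite
unions such that for all `C, D ∈ ℛ` and `ε > 0` there is `h ∈ H` with `μ(h C ∩ D) < ε`.
If every finite-measure measurable set can, for each `ε > 0`, be covered by countably many
sets of `ℛ` of total measure at most `μ(A) + ε`, then for all finite-measure measurable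
`A, B` and every `ε > 0` there is `h ∈ H` with `μ(h A ∩ B) < ε`. -/
theorem weaklyC0_of_generating_collection
    {G X : Type*} [Group G] [MulAction G X] [MeasurableSpace X]
    (μ : Measure X) (hμ : ∀ g : G, MeasurePreserving (fun x => g • x) μ μ)
    (H : Subgroup G) (R : Set (Set X))
    (hmeas : ∀ C ∈ R, MeasurableSet C)
    (hunion : ∀ C ∈ R, ∀ D ∈ R, C ∪ D ∈ R)
    (hR : ∀ C ∈ R, ∀ D ∈ R, ∀ ε : ℝ≥0∞, 0 < ε → ∃ h ∈ H, μ (h • C ∩ D) < ε)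
    (hcover : ∀ A : Set X, MeasurableSet A → μ A ≠ ∞ → ∀ ε : ℝ≥0∞, 0 < ε →
      ∃ C : ℕ → Set X, (∀ n, C n ∈ R) ∧ A ⊆ ⋃ n, C n ∧ ∑' n, μ (C n) ≤ μ A + ε) :
    ∀ A B : Set X, MeasurableSet A → MeasurableSet B → μ A ≠ ∞ → μ B ≠ ∞ →
      ∀ ε : ℝ≥0∞, 0 < ε → ∃ h ∈ H, μ (h • A ∩ B) < ε :=
  weaklyC0_of_generating_collection_general μ hμ H R hunion hR hcover
end

section
/- Let $\mathcal H$ be a complex Hilbert space with unitary representation $\pi$ of $G$, and suppose $\{\pi(g)\xi_n : g\in G, n\ge1\}$ is total in $\mathcal H$, where $\langle\pi(g)\xi_n|\xi_n\rangle = e^{-\psi(g)/n}$ for a function $\psi:G\to\mathbb R_{\ge0}$, and $\xi_n\perp\pi(g)\xi_m$ whenever $n\ne m$. If there is a sequence $(h_\ell)\subset H\subset G$ with $\min_{g,g'\in F}\psi(gh_\ell g')\to\infty$ for every finite $F\subset G$, then for every $\varepsilon>0$ and every finite family $\eta_1,\ldots,\eta_m$ from the total set, there exists $h\in H$ with $|\langle\pi(h)\eta_j|\eta_k\rangle|<\varepsilon$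 for all $j,k$. -/
/-!
Moving the group elements of `η_j = π(g_j) ξ_{n_j}` and `η_k = π(g_k) ξ_{n_k}` onto one side,
`⟨π(h) η_j | η_k⟩ = ⟨π(g_k⁻¹ h g_j) ξ_{n_j} | ξ_{n_k}⟩`. This vanishes when `n_j ≠ n_k` and equals
`e^{-ψ(g_k⁻¹ h g_j)/n_j}` otherwise, which tends to `0` along `h = h_ℓ`. Finitely many pairs
`(j, k)` are small simultaneously for all large `ℓ`.
-/

open Filter Topology

theorem LinearIsometryEquiv.inner_map_map_map_eq_inner_conj {G 𝕜 E : Type*} [Group G] [RCLike 𝕜]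
    [NormedAddCommGroup E] [InnerProductSpace 𝕜 E] (π : G →* (E ≃ₗᵢ[𝕜] E)) (h a b : G)
    (x y : E) : inner 𝕜 (π h (π a x)) (π b y) = inner 𝕜 (π (b⁻¹ * h * a) x) y := by
  rw [← (π b⁻¹).inner_map_map, map_mul, map_mul, map_inv]
  simp only [LinearIsometryEquiv.coe_inv, LinearIsometryEquiv.symm_apply_apply,
    LinearIsometryEquiv.coe_mul, Function.comp_apply]

theorem Real.tendsto_exp_neg_div_atTop_nhds_zero {c : ℝ} (hc : 0 < c) :
    Tendsto (fun t => Real.exp (-t / c)) atTop (𝓝 0) := by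
  simp only [neg_div]
  exact Real.tendsto_exp_neg_atTop_nhds_zero.comp (tendsto_id.atTop_div_const hc)

theorem tendsto_conj_atTop_of_forall_finset {G : Type*} [Group G] [DecidableEq G] {ψ : G → ℝ}
    {h : ℕ → G}
    (hmin : ∀ F : Finset G, ∀ C : ℝ, ∃ L : ℕ, ∀ ℓ ≥ L, ∀ g ∈ F, ∀ g' ∈ F,
      C ≤ ψ (g * h ℓ * g')) (g g' : G) :
    Tendsto (fun ℓ => ψ (g * h ℓ * g')) atTop atTop := by
  refine tendsto_atTop.2 fun C => eventually_atTop.2 ?_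
  obtain ⟨L, hL⟩ := hmin {g, g'} C
  exact ⟨L, fun ℓ hℓ => hL ℓ hℓ g (by simp) g' (by simp)⟩

theorem tendsto_inner_map_conj_nhds_zero {G E : Type*} [Group G] [NormedAddCommGroup E]
    [InnerProductSpace ℂ E] (π : G →* (E ≃ₗᵢ[ℂ] E)) {ψ : G → ℝ} {ξ : ℕ → E}
    (hdiag : ∀ (g : G) (n : ℕ), (inner ℂ (π g (ξ n)) (ξ n) : ℂ) =
      Real.exp (-ψ g / (n + 1)))
    (horth : ∀ (g : G) (n m : ℕ), n ≠ m → (inner ℂ (π g (ξ n)) (ξ m) : ℂ) = 0)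
    {u : ℕ → G} (hu : Tendsto (fun ℓ => ψ (u ℓ)) atTop atTop) (n m : ℕ) :
    Tendsto (fun ℓ => (inner ℂ (π (u ℓ) (ξ n)) (ξ m) : ℂ)) atTop (𝓝 0) := by
  rcases eq_or_ne n m with rfl | hnm
  · simp only [hdiag]
    have hexp := (Real.tendsto_exp_neg_div_atTop_nhds_zero (c := n + 1) (by positivity)).comp hu
    exact (Complex.continuous_ofReal.tendsto' 0 0 Complex.ofReal_zero).comp hexp
  · simp only [horth _ _ _ hnm, tendsto_const_nhds]

theorem gns_restriction_weak_mixing_general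
    {G E : Type*} [Group G] [NormedAddCommGroup E] [InnerProductSpace ℂ E]
    (π : G →* (E ≃ₗᵢ[ℂ] E)) (ψ : G → ℝ)
    (ξ : ℕ → E)
    (hdiag : ∀ (g : G) (n : ℕ), (inner ℂ (π g (ξ n)) (ξ n) : ℂ) =
      Real.exp (-ψ g / (n + 1)))
    (horth : ∀ (g : G) (n m : ℕ), n ≠ m → (inner ℂ (π g (ξ n)) (ξ m) : ℂ) = 0)
    (H : Subgroup G) (h : ℕ → G) (hhH : ∀ ℓ, h ℓ ∈ H)
    (hmin : ∀ F : Finset G, ∀ C : ℝ, ∃ L : ℕ, ∀ ℓ ≥ L, ∀ g ∈ F, ∀ g' ∈ F,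
      C ≤ ψ (g * h ℓ * g')) :
    ∀ ε > (0 : ℝ), ∀ (m : ℕ) (η : Fin m → E),
      (∀ j, ∃ (g : G) (n : ℕ), η j = π g (ξ n)) →
      ∃ h' ∈ H, ∀ j k, ‖(inner ℂ (π h' (η j)) (η k) : ℂ)‖ < ε := by
  classical
  intro ε hε m η hη
  choose g n hη using hη
  have hsmall : ∀ j k, ∀ᶠ ℓ in atTop, ‖(inner ℂ (π (h ℓ) (η j)) (η k) : ℂ)‖ < ε := by
    intro j k
    simp only [hη, LinearIsometryEquiv.inner_map_map_map_eq_inner_conj]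
    have hlim := tendsto_inner_map_conj_nhds_zero π hdiag horth
      (tendsto_conj_atTop_of_forall_finset hmin (g k)⁻¹ (g j)) (n j) (n k)
    exact hlim.norm.eventually_lt_const (by simpa using hε)
  obtain ⟨ℓ, hℓ⟩ := (eventually_all.2 fun j => eventually_all.2 (hsmall j)).exists
  exact ⟨h ℓ, hhH ℓ, hℓ⟩

/-- Core weak-mixing estimate: let `π` be a unitary representation of `G` on a complex
Hilbert space `ℋ` and `ξ_n` (for `n ≥ 1`, here indexed by `n + 1`) vectors with
`⟨π(g) ξ_n | ξ_n⟩ = e^{-ψ(g)/n}` for a function `ψ : G → ℝ≥0`, and with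
`⟨π(g) ξ_n | ξ_m⟩ = 0` for `n ≠ m`, such that `{π(g) ξ_n : g ∈ G, n ≥ 1}` is total in
`ℋ`. If `(h_ℓ) ⊆ H` satisfies `min_{g, g' ∈ F} ψ(g h_ℓ g') → ∞` for every finite
`F ⊆ G`, then for every `ε > 0` and every finite family `η₁, …, η_m` from the total set,
there is `h ∈ H` with `|⟨π(h) η_j | η_k⟩| < ε` for all `j, k`. -/
theorem gns_restriction_weak_mixing
    {G E : Type*} [Group G] [NormedAddCommGroup E] [InnerProductSpace ℂ E]
    (π : G →* (E ≃ₗᵢ[ℂ] E)) (ψ : G → ℝ) (hψ : ∀ g, 0 ≤ ψ g)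
    (ξ : ℕ → E)
    (hdiag : ∀ (g : G) (n : ℕ), (inner ℂ (π g (ξ n)) (ξ n) : ℂ) =
      Real.exp (-ψ g / (n + 1)))
    (horth : ∀ (g : G) (n m : ℕ), n ≠ m → (inner ℂ (π g (ξ n)) (ξ m) : ℂ) = 0)
    (htotal : Dense ((Submodule.span ℂ {v : E | ∃ (g : G) (n : ℕ), v = π g (ξ n)} :
      Submodule ℂ E) : Set E))
    (H : Subgroup G) (h : ℕ → G) (hhH : ∀ ℓ, h ℓ ∈ H)
    (hmin : ∀ F : Finset G, ∀ C : ℝ, ∃ L : ℕ, ∀ ℓ ≥ L, ∀ g ∈ F, ∀ g' ∈ F,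
      C ≤ ψ (g * h ℓ * g')) :
    ∀ ε > (0 : ℝ), ∀ (m : ℕ) (η : Fin m → E),
      (∀ j, ∃ (g : G) (n : ℕ), η j = π g (ξ n)) →
      ∃ h' ∈ H, ∀ j k, ‖(inner ℂ (π h' (η j)) (η k) : ℂ)‖ < ε :=
  gns_restriction_weak_mixing_general π ψ ξ hdiag horth H h hhH hmin
end
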